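/- Let (x_n) be a DR sequence with respect to (A, B), B = {b_1, b_2}, and let (l_{1,n}) and (l_{2,n}) be nondecreasing sequences of natural numbers with ⟨x_n, u⟩ = ⟨x_0, u⟩ + l_{1,n}·⟨b_1, u⟩ + l_{2,n}·⟨b_2, u⟩ and l_{1,n} + l_{2,n} = n for all n. Then, as n → +∞, l_{1,n}/n → ⟨b_2, u⟩ / ⟨b_2 − b_1, u⟩ ∈ (0, 1) and l_{2,n}/n → ⟨b_1, u⟩ / ⟨b_1 − b_2, u⟩ ∈ (0, 1). -/

import Mathlib

/-!
Write `s n = ⟪x n, u⟫`. A DR step adds `⟪b, u⟫` to `s n` and replaces the component of `x n`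
orthogonal to `u` by that of `b`, so by Pythagoras `‖R_A x (n + 1) - b‖ ^ 2` is
`(s (n + 1) + ⟪b, u⟫) ^ 2` up to a bounded term. Hence the nearest point is `b₁` (which lowers `s`)
once `s` is large and `b₂` (which raises it) once `s` is very negative, so `s` is bounded.
Since `s n - s 0 = l₁ n ⟪b₁, u⟫ + l₂ n ⟪b₂, u⟫` with `l₁ n + l₂ n = n`, dividing by `n` gives
the limits.
-/

open Filter Set
open scoped RealInnerProductSpace Topology

theorem div_sub_mem_Ioo_of_mul_neg {a b : ℝ} (hab : a * b < 0) : a / (a - b) ∈ Ioo (0 : ℝ) 1 := by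
  rcases mul_neg_iff.1 hab with ⟨ha, hb⟩ | ⟨ha, hb⟩
  · exact ⟨div_pos ha (by linarith), (div_lt_one (by linarith)).2 (by linarith)⟩
  · exact ⟨div_pos_of_neg_of_neg ha (by linarith), (div_lt_one_of_neg (by linarith)).2 (by linarith)⟩

theorem le_max_of_le_add_of_le_imp_le {s : ℕ → ℝ} {M δ : ℝ}
    (hstep : ∀ n, s (n + 1) ≤ s n + δ) (hdrift : ∀ n, M ≤ s n → s (n + 1) ≤ s n) (n : ℕ) :
    s n ≤ max (s 0) (M + δ) := by
  induction n with
  | zero => exact le_max_left _ _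
  | succ n ih =>
    rcases le_or_gt M (s n) with h | h
    · exact (hdrift n h).trans ih
    · exact (hstep n).trans (le_max_of_le_right (by linarith))

theorem tendsto_div_natCast_of_forall_mem_Icc {s : ℕ → ℝ} {L U : ℝ} (hs : ∀ n, s n ∈ Icc L U) :
    Tendsto (fun n => s n / n) atTop (𝓝 0) := by
  refine tendsto_of_tendsto_of_tendsto_of_le_of_le (tendsto_const_div_atTop_nhds_zero_nat L)
    (tendsto_const_div_atTop_nhds_zero_nat U) (fun n => ?_) (fun n => ?_)
  · exact div_le_div_of_nonneg_right (hs n).1 n.cast_nonneg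
  · exact div_le_div_of_nonneg_right (hs n).2 n.cast_nonneg

theorem tendsto_frequency_of_mean_tendsto_zero {l₁ l₂ : ℕ → ℕ} {β₁ β₂ : ℝ} (hβ : β₁ ≠ β₂)
    (hl : ∀ n, l₁ n + l₂ n = n)
    (hmean : Tendsto (fun n => (l₁ n * β₁ + l₂ n * β₂) / n) atTop (𝓝 0)) :
    Tendsto (fun n => (l₁ n : ℝ) / n) atTop (𝓝 (β₂ / (β₂ - β₁))) := by
  have hlim := (tendsto_const_nhds (x := β₂)).sub hmean |>.div_const (β₂ - β₁)
  rw [sub_zero] at hlim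
  refine hlim.congr' ?_
  filter_upwards [eventually_gt_atTop 0] with n hn
  have hn' : (n : ℝ) ≠ 0 := by positivity
  have hsum : (l₁ n : ℝ) + l₂ n = n := by exact_mod_cast hl n
  field_simp [sub_ne_zero.2 hβ.symm]
  linear_combination (-β₂) * hsum

section Hyperplane

variable {X : Type*} [NormedAddCommGroup X] [InnerProductSpace ℝ X] {u : X}

theorem norm_reflect_sub_sq (hu : ‖u‖ = 1) (x b : X) :
    ‖(x - (2 * ⟪x, u⟫) • u) - b‖ ^ 2 =
      ‖(x - ⟪x, u⟫ • u) - (b - ⟪b, u⟫ • u)‖ ^ 2 + (⟪x, u⟫ + ⟪b, u⟫) ^ 2 := by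
  have huu : ⟪u, u⟫ = 1 := by rw [real_inner_self_eq_norm_sq, hu, one_pow]
  have horth : ⟪(x - ⟪x, u⟫ • u) - (b - ⟪b, u⟫ • u), (⟪x, u⟫ + ⟪b, u⟫) • u⟫ = 0 := by
    simp only [real_inner_smul_right, inner_sub_left, real_inner_smul_left, huu]
    ring
  have hdecomp : (x - (2 * ⟪x, u⟫) • u) - b =
      (x - ⟪x, u⟫ • u) - (b - ⟪b, u⟫ • u) - (⟪x, u⟫ + ⟪b, u⟫) • u := by module
  rw [hdecomp, sq, norm_sub_sq_eq_norm_sq_add_norm_sq_real horth, norm_smul, hu, mul_one,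
    Real.norm_eq_abs, abs_mul_abs_self]
  ring

theorem inner_sub_mul_le_of_norm_reflect_sub_le (hu : ‖u‖ = 1) {x b b' : X}
    (h : ‖(x - (2 * ⟪x, u⟫) • u) - b‖ ≤ ‖(x - (2 * ⟪x, u⟫) • u) - b'‖) :
    (⟪b, u⟫ - ⟪b', u⟫) * (2 * ⟪x, u⟫ + ⟪b, u⟫ + ⟪b', u⟫) ≤
      ‖(x - ⟪x, u⟫ • u) - (b' - ⟪b', u⟫ • u)‖ ^ 2 - ‖(x - ⟪x, u⟫ • u) - (b - ⟪b, u⟫ • u)‖ ^ 2 := by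
  have hsq := pow_le_pow_left₀ (norm_nonneg _) h 2
  rw [norm_reflect_sub_sq hu, norm_reflect_sub_sq hu] at hsq
  linear_combination hsq

theorem inner_smul_unit_add (hu : ‖u‖ = 1) (t : ℝ) (b : X) : ⟪t • u + b, u⟫ = t + ⟪b, u⟫ := by
  rw [inner_add_left, real_inner_smul_left, real_inner_self_eq_norm_sq, hu, one_pow, mul_one]

theorem smul_unit_add_sub_inner_smul (hu : ‖u‖ = 1) (t : ℝ) (b : X) :
    (t • u + b) - ⟪t • u + b, u⟫ • u = b - ⟪b, u⟫ • u := by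
  rw [inner_smul_unit_add hu]; module

/-- `x - (2 * ⟪x, u⟫) • u` is `R_A x` and `⟪x, u⟫ • u + b` is `x - P_A x + b`. -/
def IsDRSequence (u : X) (B : Set X) (x : ℕ → X) : Prop :=
  ∀ n, ∃ b ∈ B,
    (∀ b' ∈ B, ‖(x n - (2 * ⟪x n, u⟫) • u) - b‖ ≤ ‖(x n - (2 * ⟪x n, u⟫) • u) - b'‖) ∧
      x (n + 1) = ⟪x n, u⟫ • u + b

namespace IsDRSequence

variable {B : Set X} {x : ℕ → X} {b₁ b₂ : X}

theorem neg (hx : IsDRSequence u B x) : IsDRSequence (-u) B x := by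
  intro n
  obtain ⟨b, hb, hnear, hnext⟩ := hx n
  refine ⟨b, hb, ?_, ?_⟩
  · simpa only [inner_neg_right, mul_neg, neg_smul_neg] using hnear
  · simpa only [inner_neg_right, neg_smul_neg] using hnext

theorem exists_forall_inner_le (hu : ‖u‖ = 1) (hx : IsDRSequence u {b₁, b₂} x)
    (h12 : ⟪b₁, u⟫ < ⟪b₂, u⟫) (h1 : ⟪b₁, u⟫ ≤ 0) : ∃ C, ∀ n, ⟪x n, u⟫ ≤ C := by
  choose b hb hnear hnext using hx
  have hs : ∀ n, ⟪x (n + 1), u⟫ = ⟪x n, u⟫ + ⟪b n, u⟫ := fun n => by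
    rw [hnext, inner_smul_unit_add hu]
  -- `x (n + 1)` and `b n ∈ {b₁, b₂}` have the same component orthogonal to `u`.
  set K := ‖(b₁ - ⟪b₁, u⟫ • u) - (b₂ - ⟪b₂, u⟫ • u)‖ ^ 2
  have hK : ∀ n,
      (⟪b (n + 1), u⟫ - ⟪b₁, u⟫) * (2 * ⟪x (n + 1), u⟫ + ⟪b (n + 1), u⟫ + ⟪b₁, u⟫) ≤ K := by
    intro n
    refine (inner_sub_mul_le_of_norm_reflect_sub_le hu
      (hnear (n + 1) b₁ (mem_insert _ _))).trans ((sub_le_self _ (sq_nonneg _)).trans ?_)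
    rw [hnext n, smul_unit_add_sub_inner_smul hu]
    rcases hb n with h | h <;> rw [h]
    · rw [sub_self, norm_zero, sq, mul_zero]
      positivity
    · rw [norm_sub_rev]
  obtain ⟨M, hx0M, hM⟩ : ∃ M, ⟪x 0, u⟫ < M ∧
      ∀ t ≥ M, K < (⟪b₂, u⟫ - ⟪b₁, u⟫) * (2 * t + ⟪b₂, u⟫ + ⟪b₁, u⟫) := by
    refine ⟨max (⟪x 0, u⟫ + 1) ((K / (⟪b₂, u⟫ - ⟪b₁, u⟫) - ⟪b₂, u⟫ - ⟪b₁, u⟫) / 2 + 1),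
      (lt_add_one _).trans_le (le_max_left _ _), fun t ht => ?_⟩
    rw [← div_lt_iff₀' (sub_pos.2 h12)]
    linarith [(le_max_right _ _).trans ht]
  have hdrift : ∀ n, M ≤ ⟪x n, u⟫ → ⟪x (n + 1), u⟫ ≤ ⟪x n, u⟫ := by
    rintro (_ | n) hn
    · exact absurd hn (not_le.2 hx0M)
    · rcases hb (n + 1) with h | h
      · rw [hs, h]
        linarith
      · have := hK n
        rw [h] at this
        linarith [hM _ hn]
  have hstep : ∀ n, ⟪x (n + 1), u⟫ ≤ ⟪x n, u⟫ + ⟪b₂, u⟫ := fun n => by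
    rw [hs]
    rcases hb n with h | h <;> rw [h]
    linarith
  exact ⟨_, le_max_of_le_add_of_le_imp_le hstep hdrift⟩

theorem exists_forall_le_inner (hu : ‖u‖ = 1) (hx : IsDRSequence u {b₁, b₂} x)
    (h12 : ⟪b₁, u⟫ < ⟪b₂, u⟫) (h2 : 0 ≤ ⟪b₂, u⟫) : ∃ C, ∀ n, C ≤ ⟪x n, u⟫ := by
  -- Replacing `u` by `-u` leaves the iteration unchanged and swaps the roles of `b₁` and `b₂`.
  have hx' : IsDRSequence (-u) {b₂, b₁} x := pair_comm b₁ b₂ ▸ hx.neg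
  obtain ⟨C, hC⟩ := hx'.exists_forall_inner_le (by rwa [norm_neg])
    (by simpa only [inner_neg_right, neg_lt_neg_iff] using h12)
    (by simpa only [inner_neg_right, neg_nonpos] using h2)
  exact ⟨-C, fun n => by simpa only [inner_neg_right, neg_le] using hC n⟩

end IsDRSequence

end Hyperplane

theorem dr_hyperplane_doubleton_stmt_8_general
    {X : Type*} [NormedAddCommGroup X] [InnerProductSpace ℝ X]
    (u : X) (hu : ‖u‖ = 1)
    (b₁ b₂ : X) (hb₁ : ⟪b₁, u⟫ < 0) (hb₂ : 0 < ⟪b₂, u⟫)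
    (x : ℕ → X)
    (hx : ∀ n : ℕ, ∃ b ∈ ({b₁, b₂} : Set X),
      (∀ b' ∈ ({b₁, b₂} : Set X),
        ‖(x n - (2 * ⟪x n, u⟫) • u) - b‖ ≤ ‖(x n - (2 * ⟪x n, u⟫) • u) - b'‖) ∧
      x (n + 1) = ⟪x n, u⟫ • u + b)
    (l₁ l₂ : ℕ → ℕ)
    (hl : ∀ n : ℕ, ⟪x n, u⟫ = ⟪x 0, u⟫ + (l₁ n : ℝ) * ⟪b₁, u⟫ + (l₂ n : ℝ) * ⟪b₂, u⟫ ∧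
      l₁ n + l₂ n = n) :
    ⟪b₂, u⟫ / ⟪b₂ - b₁, u⟫ ∈ Set.Ioo (0 : ℝ) 1 ∧
    ⟪b₁, u⟫ / ⟪b₁ - b₂, u⟫ ∈ Set.Ioo (0 : ℝ) 1 ∧
    Tendsto (fun n : ℕ => (l₁ n : ℝ) / n) atTop (nhds (⟪b₂, u⟫ / ⟪b₂ - b₁, u⟫)) ∧
    Tendsto (fun n : ℕ => (l₂ n : ℝ) / n) atTop (nhds (⟪b₁, u⟫ / ⟪b₁ - b₂, u⟫)) := by
  have hβ : ⟪b₁, u⟫ < ⟪b₂, u⟫ := hb₁.trans hb₂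
  obtain ⟨U, hU⟩ := IsDRSequence.exists_forall_inner_le hu hx hβ hb₁.le
  obtain ⟨L, hL⟩ := IsDRSequence.exists_forall_le_inner hu hx hβ hb₂.le
  have hmean : Tendsto (fun n => (l₁ n * ⟪b₁, u⟫ + l₂ n * ⟪b₂, u⟫) / n) atTop (𝓝 0) :=
    tendsto_div_natCast_of_forall_mem_Icc (L := L - ⟪x 0, u⟫) (U := U - ⟪x 0, u⟫)
      fun n => ⟨by linarith [(hl n).1, hL n], by linarith [(hl n).1, hU n]⟩
  have hcount : ∀ n, l₁ n + l₂ n = n := fun n => (hl n).2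
  rw [inner_sub_left, inner_sub_left]
  refine ⟨div_sub_mem_Ioo_of_mul_neg (mul_neg_of_pos_of_neg hb₂ hb₁),
    div_sub_mem_Ioo_of_mul_neg (mul_neg_of_neg_of_pos hb₁ hb₂),
    tendsto_frequency_of_mean_tendsto_zero hβ.ne hcount hmean,
    tendsto_frequency_of_mean_tendsto_zero hβ.ne' (fun n => by rw [add_comm, hcount]) ?_⟩
  simpa only [add_comm (_ * ⟪b₁, u⟫)] using hmean

/-- If `l₁, l₂ : ℕ → ℕ` are nondecreasing with
`⟪x n, u⟫ = ⟪x 0, u⟫ + l₁ n ⟪b₁,u⟫ + l₂ n ⟪b₂,u⟫` and `l₁ n + l₂ n = n` for a DR sequence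
`(x n)`, then `l₁ n / n → ⟪b₂,u⟫/⟪b₂-b₁,u⟫ ∈ (0,1)` and
`l₂ n / n → ⟪b₁,u⟫/⟪b₁-b₂,u⟫ ∈ (0,1)`. -/
theorem dr_hyperplane_doubleton_stmt_8
    {X : Type*} [NormedAddCommGroup X] [InnerProductSpace ℝ X] [FiniteDimensional ℝ X]
    (u : X) (hu : ‖u‖ = 1)
    (b₁ b₂ : X) (hb₁ : ⟪b₁, u⟫ < 0) (hb₂ : 0 < ⟪b₂, u⟫)
    (x : ℕ → X)
    (hx : ∀ n : ℕ, ∃ b ∈ ({b₁, b₂} : Set X),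
      (∀ b' ∈ ({b₁, b₂} : Set X),
        ‖(x n - (2 * ⟪x n, u⟫) • u) - b‖ ≤ ‖(x n - (2 * ⟪x n, u⟫) • u) - b'‖) ∧
      x (n + 1) = ⟪x n, u⟫ • u + b)
    (l₁ l₂ : ℕ → ℕ) (hl₁ : Monotone l₁) (hl₂ : Monotone l₂)
    (hl : ∀ n : ℕ, ⟪x n, u⟫ = ⟪x 0, u⟫ + (l₁ n : ℝ) * ⟪b₁, u⟫ + (l₂ n : ℝ) * ⟪b₂, u⟫ ∧
      l₁ n + l₂ n = n) :
    ⟪b₂, u⟫ / ⟪b₂ - b₁, u⟫ ∈ Set.Ioo (0 : ℝ) 1 ∧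
    ⟪b₁, u⟫ / ⟪b₁ - b₂, u⟫ ∈ Set.Ioo (0 : ℝ) 1 ∧
    Tendsto (fun n : ℕ => (l₁ n : ℝ) / n) atTop (nhds (⟪b₂, u⟫ / ⟪b₂ - b₁, u⟫)) ∧
    Tendsto (fun n : ℕ => (l₂ n : ℝ) / n) atTop (nhds (⟪b₁, u⟫ / ⟪b₁ - b₂, u⟫)) :=
  dr_hyperplane_doubleton_stmt_8_general u hu b₁ b₂ hb₁ hb₂ x hx l₁ l₂ hl
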